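/- Soundness of the overall planner (Theorem 1): Let X be a type and let φ be an STL formula in positive normal form without disjunctions, in the restricted fragment where every until-left operand is a conjunction of always-over-atomic formulas, and let (P_φ, T_φ, Λ_φ) be its recursive decomposition with feasible assignment set F_φ ⊆ ℕ^{Λ_φ}. Suppose there exist a feasible assignment λ* ∈ F_φ, timed waypoints (x̃₀, t₀), (x̃₁, t₁), …, (x̃ₙ, tₙ) with 0 = t₀ ≤ t₁ ≤ … ≤ tₙ, and a signal x : ℕ → X such that: (i) x(tᵢ) = x̃ᵢ for every 0 ≤ i ≤ n; (ii) for every reachability progress R(a_Λ, b_Λ, μ) ∈ P_φ there exists an index i with tᵢ ∈ [a_Λ(λ*), b_Λ(λ*)] and μ(x̃ᵢ); and (iii) for every invariance progress I(a_Λ, b_Λ, μ) ∈ P_φ and every t ∈ [a_Λ(λ*), b_Λ(λ*)], μ(x t) holds. Then x satisfies φ under the Boolean semantics of STL. -/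

import Mathlib

/-! Signals, STL syntax/semantics, and the semantics-based decomposition into
progresses and unary time-variable constraints. -/

/-- The `k`-shift of a signal. -/
def shift {X : Type} (x : ℕ → X) (k : ℕ) : ℕ → X := fun t => x (t + k)

/-- Conjunctions of formulas of the form `G_{[c,d]} μ` (always over an atomic predicate),
the only shape allowed as the left operand of an until. -/
inductive GAtomConj (X : Type) where
  | gatom : ℕ → ℕ → (X → Prop) → GAtomConj X
  | conj : GAtomConj X → GAtomConj X → GAtomConj X

/-- STL formulas in positive normal form without disjunctions, over atomic predicates
`μ : X → Prop`, by the grammar `φ ::= μ | φ₁ ∧ φ₂ | F_{[a,b]}φ | G_{[a,b]}φ | φ₁ U_{[a,b]} φ₂`,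
where every until-left operand is a conjunction of always-over-atomic formulas. -/
inductive STL (X : Type) where
  | atom : (X → Prop) → STL X
  | conj : STL X → STL X → STL X
  | F : ℕ → ℕ → STL X → STL X
  | G : ℕ → ℕ → STL X → STL X
  | U : GAtomConj X → ℕ → ℕ → STL X → STL X

/-- Boolean semantics of until-left operands. -/
def GAtomConj.sat {X : Type} : GAtomConj X → (ℕ → X) → Prop
  | .gatom c d μ, x => ∀ k ∈ Set.Icc c d, μ (shift x k 0)
  | .conj p q, x => p.sat x ∧ q.sat x

/-- Boolean semantics of STL over signals. -/
def STL.sat {X : Type} : STL X → (ℕ → X) → Prop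
  | .atom μ, x => μ (x 0)
  | .conj φ ψ, x => φ.sat x ∧ ψ.sat x
  | .F a b φ, x => ∃ k ∈ Set.Icc a b, φ.sat (shift x k)
  | .G a b φ, x => ∀ k ∈ Set.Icc a b, φ.sat (shift x k)
  | .U g a b ψ, x =>
      ∃ k ∈ Set.Icc a b, ψ.sat (shift x k) ∧ ∀ j ∈ Set.Icc 0 k, g.sat (shift x j)

/-- Well-formedness: every time interval `[a,b]` in the formula satisfies `a ≤ b`. -/
def GAtomConj.WF {X : Type} : GAtomConj X → Prop
  | .gatom c d _ => c ≤ d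
  | .conj p q => p.WF ∧ q.WF

/-- Well-formedness: every time interval `[a,b]` in the formula satisfies `a ≤ b`. -/
def STL.WF {X : Type} : STL X → Prop
  | .atom _ => True
  | .conj φ ψ => φ.WF ∧ ψ.WF
  | .F a b φ => a ≤ b ∧ φ.WF
  | .G a b φ => a ≤ b ∧ φ.WF
  | .U g a b ψ => a ≤ b ∧ g.WF ∧ ψ.WF

/-- An interval endpoint: an affine 0-1 combination of the time variables plus a constant,
recorded as the constant together with the list of variables occurring (with coefficient 1). -/
structure Aff (ι : Type) where
  const : ℕ
  vars : List ι

/-- Evaluation of an endpoint at an assignment of the time variables. -/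
def Aff.eval {ι : Type} (e : Aff ι) (lam : ι → ℕ) : ℕ := e.const + (e.vars.map lam).sum

/-- Rename the time variables of an endpoint. -/
def Aff.rename {ι ι' : Type} (f : ι → ι') (e : Aff ι) : Aff ι' := ⟨e.const, e.vars.map f⟩

/-- Shift an endpoint by a constant. -/
def Aff.shiftConst {ι : Type} (k : ℕ) (e : Aff ι) : Aff ι := ⟨e.const + k, e.vars⟩

/-- Add a time variable to an endpoint. -/
def Aff.addVar {ι : Type} (v : ι) (e : Aff ι) : Aff ι := ⟨e.const, v :: e.vars⟩

/-- A progress: a reachability progress `R(a_Λ, b_Λ, μ)` or an invariance progress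
`I(a_Λ, b_Λ, μ)`, whose endpoints may depend on the time variables in `ι`. -/
inductive Prog (X ι : Type) where
  | reach : Aff ι → Aff ι → (X → Prop) → Prog X ι
  | inv : Aff ι → Aff ι → (X → Prop) → Prog X ι

/-- A progress holds on a signal `x` under an assignment `lam` of the time variables:
`R(a,b,μ)` holds iff `μ (x t)` for some `t ∈ [a,b]`, and `I(a,b,μ)` holds iff `μ (x t)`
for all `t ∈ [a,b]` (endpoints evaluated at `lam`). -/
def Prog.holds {X ι : Type} : Prog X ι → (ι → ℕ) → (ℕ → X) → Prop
  | .reach lo hi μ, lam, x => ∃ t ∈ Set.Icc (lo.eval lam) (hi.eval lam), μ (x t)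
  | .inv lo hi μ, lam, x => ∀ t ∈ Set.Icc (lo.eval lam) (hi.eval lam), μ (x t)

/-- Rename the time variables of a progress. -/
def Prog.rename {X ι ι' : Type} (f : ι → ι') : Prog X ι → Prog X ι'
  | .reach lo hi μ => .reach (lo.rename f) (hi.rename f) μ
  | .inv lo hi μ => .inv (lo.rename f) (hi.rename f) μ

/-- Shift both endpoints of a progress by a constant. -/
def Prog.shiftConst {X ι : Type} (k : ℕ) : Prog X ι → Prog X ι
  | .reach lo hi μ => .reach (lo.shiftConst k) (hi.shiftConst k) μ
  | .inv lo hi μ => .inv (lo.shiftConst k) (hi.shiftConst k) μ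

/-- Add a time variable to both endpoints of a progress. -/
def Prog.addVar {X ι : Type} (v : ι) : Prog X ι → Prog X ι
  | .reach lo hi μ => .reach (lo.addVar v) (hi.addVar v) μ
  | .inv lo hi μ => .inv (lo.addVar v) (hi.addVar v) μ

/-- Whether a progress is an invariance progress with constant endpoints. -/
def Prog.isConstInv {X ι : Type} : Prog X ι → Bool
  | .inv ⟨_, []⟩ ⟨_, []⟩ _ => true
  | _ => false

/-- The result of the decomposition: a set of time variables `ι` (= `Λ_φ`), one unary
interval constraint `λ_i ∈ [cLo i, cHi i]` per variable (= `T_φ`), and a list of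
progresses (= `P_φ`). -/
structure Decomp (X : Type) where
  ι : Type
  cLo : ι → ℕ
  cHi : ι → ℕ
  progs : List (Prog X ι)

/-- The feasible assignments: those satisfying every unary interval constraint. -/
def Decomp.Feasible {X : Type} (D : Decomp X) (lam : D.ι → ℕ) : Prop :=
  ∀ i, D.cLo i ≤ lam i ∧ lam i ≤ D.cHi i

/-- The constant-endpoint invariances `I(c,d,μ)` constituting the decomposition of a
conjunction of always-over-atomic formulas. -/
def GAtomConj.toList {X : Type} : GAtomConj X → List (ℕ × ℕ × (X → Prop))
  | .gatom c d μ => [(c, d, μ)]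
  | .conj p q => p.toList ++ q.toList

/-- The atomic predicate of a formula, if the formula is a bare atom. -/
def STL.atomOf {X : Type} : STL X → Option (X → Prop)
  | .atom μ => some μ
  | _ => none

/-- Disjoint union of two decompositions (variables renamed apart), for conjunctions. -/
def Decomp.conjoin {X : Type} (D₁ D₂ : Decomp X) : Decomp X :=
  ⟨D₁.ι ⊕ D₂.ι, Sum.elim D₁.cLo D₂.cLo, Sum.elim D₁.cHi D₂.cHi,
    D₁.progs.map (Prog.rename Sum.inl) ++ D₂.progs.map (Prog.rename Sum.inr)⟩

/-- Outer `F_{[a,b]}` rule: for `b > a`, introduce a fresh variable `λ` (the `none` index)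
with constraint `λ ∈ [a,b]` and add `λ` to both endpoints of every progress; for `a = b`,
add the constant `a` instead, with no fresh variable. -/
def Decomp.outerF {X : Type} (a b : ℕ) (D : Decomp X) : Decomp X :=
  if a = b then
    ⟨D.ι, D.cLo, D.cHi, D.progs.map (Prog.shiftConst a)⟩
  else
    ⟨Option D.ι, fun i => i.elim a D.cLo, fun i => i.elim b D.cHi,
      D.progs.map (fun p => (p.rename some).addVar none)⟩

/-- Outer `G_{[a,b]}` rule: one independent copy of the decomposition for each
`k = a + j ∈ [a,b]`, with all endpoints shifted by `+k`, merging the copies of each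
constant-endpoint invariance `I(c,d,μ)` into the single progress `I(c+a, d+b, μ)`. -/
def Decomp.outerG {X : Type} (a b : ℕ) (D : Decomp X) : Decomp X :=
  ⟨Fin (b + 1 - a) × D.ι, fun p => D.cLo p.2, fun p => D.cHi p.2,
    (D.progs.filterMap (fun p =>
      match p with
      | .inv ⟨c, []⟩ ⟨d, []⟩ μ => some (.inv ⟨c + a, []⟩ ⟨d + b, []⟩ μ)
      | _ => none))
    ++ ((List.finRange (b + 1 - a)).flatMap (fun j =>
        (D.progs.filter (fun p => !p.isConstInv)).map
          (fun p => (p.rename (fun i => (j, i))).shiftConst (a + j.1))))⟩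

/-- Outer until rule for `φ U_{[a,b]} ψ`, applied to the decomposition `D` of `ψ` and the
left operand `g` (whose decomposition consists of the constant-endpoint invariances
`I(c,d,μ)` listed by `g.toList`): introduce a fresh variable `λ` (the `none` index) with
constraint `λ ∈ [a,b]`, shift all endpoints of the progresses of `ψ` by `+λ`, and replace
each `I(c,d,μ)` from the left operand by `I(c, d+λ, μ)`. -/
def Decomp.outerU {X : Type} (g : GAtomConj X) (a b : ℕ) (D : Decomp X) : Decomp X :=
  ⟨Option D.ι, fun i => i.elim a D.cLo, fun i => i.elim b D.cHi,
    (D.progs.map (fun p => (p.rename some).addVar none))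
    ++ g.toList.map (fun cdm =>
        .inv ⟨cdm.1, []⟩ ⟨cdm.2.1, [(none : Option D.ι)]⟩ cdm.2.2)⟩

/-- The recursive semantics-based decomposition of an STL formula into progresses,
time variables, and unary time-variable constraints.  The base cases are:
`F_{[a,b]}μ ↦ ({R(λ,λ,μ)}, {λ ∈ [a,b]})`, `G_{[a,b]}μ ↦ ({I(a,b,μ)}, ∅)`, and an atom
`μ ↦ ({R(0,0,μ)}, ∅)`; compound formulas use the outer rules above. -/
def decompose {X : Type} : STL X → Decomp X
  | .atom μ =>
      ⟨Empty, fun i => i.elim, fun i => i.elim, [.reach ⟨0, []⟩ ⟨0, []⟩ μ]⟩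
  | .conj φ ψ => (decompose φ).conjoin (decompose ψ)
  | .F a b φ =>
      match φ.atomOf with
      | some μ =>
          -- base case `F_{[a,b]} μ`: a fresh variable `λ` with constraint `λ ∈ [a,b]`
          -- and the single progress `R(λ, λ, μ)`
          ⟨Unit, fun _ => a, fun _ => b, [.reach ⟨0, [()]⟩ ⟨0, [()]⟩ μ]⟩
      | none => (decompose φ).outerF a b
  | .G a b φ =>
      match φ.atomOf with
      | some μ =>
          -- base case `G_{[a,b]} μ`: the single progress `I(a, b, μ)`, no constraints
          ⟨Empty, fun i => i.elim, fun i => i.elim, [.inv ⟨a, []⟩ ⟨b, []⟩ μ]⟩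
      | none => (decompose φ).outerG a b
  | .U g a b ψ => (decompose ψ).outerU g a b

/-! Auxiliary lemmas for the soundness proof. -/

lemma Aff.eval_rename' {ι ι' : Type} (f : ι → ι') (e : Aff ι) (lam : ι' → ℕ) :
    (e.rename f).eval lam = e.eval (lam ∘ f) := by
  simp [Aff.eval, Aff.rename, List.map_map]

lemma Aff.eval_shiftConst' {ι : Type} (k : ℕ) (e : Aff ι) (lam : ι → ℕ) :
    (e.shiftConst k).eval lam = e.eval lam + k := by
  simp [Aff.eval, Aff.shiftConst]; omega

lemma Aff.eval_addVar' {ι : Type} (v : ι) (e : Aff ι) (lam : ι → ℕ) :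
    (e.addVar v).eval lam = e.eval lam + lam v := by
  simp [Aff.eval, Aff.addVar]; omega

lemma Prog.holds_rename' {X ι ι' : Type} (f : ι → ι') (p : Prog X ι) (lam : ι' → ℕ)
    (x : ℕ → X) : (p.rename f).holds lam x ↔ p.holds (lam ∘ f) x := by
  cases p <;> simp [Prog.rename, Prog.holds, Aff.eval_rename']

lemma Prog.holds_shiftConst' {X ι : Type} (k : ℕ) (p : Prog X ι) (lam : ι → ℕ)
    (x : ℕ → X) : (p.shiftConst k).holds lam x ↔ p.holds lam (shift x k) := by
  cases p with
  | reach lo hi μ =>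
    simp only [Prog.shiftConst, Prog.holds, Aff.eval_shiftConst', shift, Set.mem_Icc]
    constructor
    · rintro ⟨t, ⟨h1, h2⟩, hμ⟩
      exact ⟨t - k, ⟨by omega, by omega⟩, by rwa [Nat.sub_add_cancel (by omega)]⟩
    · rintro ⟨t, ⟨h1, h2⟩, hμ⟩
      exact ⟨t + k, ⟨by omega, by omega⟩, hμ⟩
  | inv lo hi μ =>
    simp only [Prog.shiftConst, Prog.holds, Aff.eval_shiftConst', shift, Set.mem_Icc]
    constructor
    · intro h t ht; exact h (t + k) ⟨by omega, by omega⟩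
    · intro h t ht
      have := h (t - k) ⟨by omega, by omega⟩
      rwa [Nat.sub_add_cancel (by omega)] at this

lemma Prog.holds_addVar' {X ι : Type} (v : ι) (p : Prog X ι) (lam : ι → ℕ)
    (x : ℕ → X) : (p.addVar v).holds lam x ↔ p.holds lam (shift x (lam v)) := by
  cases p with
  | reach lo hi μ =>
    simp only [Prog.addVar, Prog.holds, Aff.eval_addVar', shift, Set.mem_Icc]
    constructor
    · rintro ⟨t, ⟨h1, h2⟩, hμ⟩
      exact ⟨t - lam v, ⟨by omega, by omega⟩, by rwa [Nat.sub_add_cancel (by omega)]⟩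
    · rintro ⟨t, ⟨h1, h2⟩, hμ⟩
      exact ⟨t + lam v, ⟨by omega, by omega⟩, hμ⟩
  | inv lo hi μ =>
    simp only [Prog.addVar, Prog.holds, Aff.eval_addVar', shift, Set.mem_Icc]
    constructor
    · intro h t ht; exact h (t + lam v) ⟨by omega, by omega⟩
    · intro h t ht
      have := h (t - lam v) ⟨by omega, by omega⟩
      rwa [Nat.sub_add_cancel (by omega)] at this

lemma STL.atomOf_eq_some {X : Type} {φ : STL X} {μ : X → Prop}
    (h : φ.atomOf = some μ) : φ = .atom μ := by
  cases φ <;> simp [STL.atomOf] at h <;> simp [h]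

/-- A decomposition is realized by a signal if some feasible assignment makes all
progresses hold. -/
def Decomp.OK {X : Type} (D : Decomp X) (x : ℕ → X) : Prop :=
  ∃ lam, D.Feasible lam ∧ ∀ p ∈ D.progs, p.holds lam x

lemma gsat_aux {X : Type} (x : ℕ → X) (k : ℕ) (g : GAtomConj X)
    (h : ∀ cdm ∈ g.toList, ∀ t ∈ Set.Icc cdm.1 (cdm.2.1 + k), cdm.2.2 (x t)) :
    ∀ j ≤ k, g.sat (shift x j) := by
  induction g with
  | gatom c d μ =>
    intro j hj
    simp only [GAtomConj.sat, shift, Set.mem_Icc]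
    intro m ⟨hm1, hm2⟩
    have := h (c, d, μ) (by simp [GAtomConj.toList]) (0 + m + j)
      (by simp only [Set.mem_Icc]; omega)
    exact this
  | conj p q ihp ihq =>
    intro j hj
    exact ⟨ihp (fun cdm hc => h cdm (by simp [GAtomConj.toList, hc])) j hj,
           ihq (fun cdm hc => h cdm (by simp [GAtomConj.toList, hc])) j hj⟩

lemma Prog.isConstInv_eq_true {X ι : Type} {p : Prog X ι} (h : p.isConstInv = true) :
    ∃ c d μ, p = .inv ⟨c, []⟩ ⟨d, []⟩ μ := by
  cases p with
  | reach lo hi μ => simp [Prog.isConstInv] at h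
  | inv lo hi μ =>
    obtain ⟨c, cv⟩ := lo; obtain ⟨d, dv⟩ := hi
    cases cv with
    | cons v vs => simp [Prog.isConstInv] at h
    | nil =>
      cases dv with
      | cons v vs => simp [Prog.isConstInv] at h
      | nil => exact ⟨c, d, μ, rfl⟩

theorem sound_aux {X : Type} (φ : STL X) (hwf : φ.WF) :
    ∀ x : ℕ → X, (decompose φ).OK x → φ.sat x := by
  induction φ with
  | atom μ =>
    rintro x ⟨lam, hfeas, h⟩
    have := h (Prog.reach ⟨0, []⟩ ⟨0, []⟩ μ) (by exact List.mem_singleton.mpr rfl)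
    simp only [Prog.holds, Aff.eval, List.map_nil, List.sum_nil, Set.mem_Icc] at this
    obtain ⟨t, ⟨_, ht⟩, hμ⟩ := this
    have : t = 0 := by omega
    subst this
    exact hμ
  | conj φ ψ ihφ ihψ =>
    rintro x ⟨lam, hfeas, h⟩
    refine ⟨ihφ hwf.1 x ⟨lam ∘ Sum.inl, fun i => hfeas (Sum.inl i), ?_⟩,
            ihψ hwf.2 x ⟨lam ∘ Sum.inr, fun i => hfeas (Sum.inr i), ?_⟩⟩
    · intro p hp
      have := h (p.rename Sum.inl)
        (by exact List.mem_append.mpr (Or.inl (List.mem_map.mpr ⟨p, hp, rfl⟩)))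
      exact (Prog.holds_rename' _ _ _ _).mp this
    · intro p hp
      have := h (p.rename Sum.inr)
        (by exact List.mem_append.mpr (Or.inr (List.mem_map.mpr ⟨p, hp, rfl⟩)))
      exact (Prog.holds_rename' _ _ _ _).mp this
  | F a b φ ih =>
    intro x hok
    cases hA : φ.atomOf with
    | some μ =>
      have hφ : φ = .atom μ := STL.atomOf_eq_some hA
      subst hφ
      rw [show decompose (STL.F a b (STL.atom μ)) =
        ⟨Unit, fun _ => a, fun _ => b, [.reach ⟨0, [()]⟩ ⟨0, [()]⟩ μ]⟩ from rfl] at hok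
      obtain ⟨lam, hfeas, h⟩ := hok
      have hh := h _ (List.mem_singleton.mpr rfl)
      simp only [Prog.holds, Aff.eval, List.map_cons, List.map_nil, List.sum_cons,
        List.sum_nil, Set.mem_Icc] at hh
      obtain ⟨t, ⟨ht1, ht2⟩, hμ⟩ := hh
      have htk : t = lam () := by omega
      obtain ⟨hlo, hhi⟩ := hfeas ()
      exact ⟨lam (), Set.mem_Icc.mpr ⟨hlo, hhi⟩, by subst htk; simpa [STL.sat, shift] using hμ⟩
    | none =>
      have hdec : decompose (STL.F a b φ) = (decompose φ).outerF a b := by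
        simp only [decompose]; rw [hA]
      rw [hdec] at hok
      by_cases hab : a = b
      · subst hab
        rw [show (decompose φ).outerF a a =
          ⟨(decompose φ).ι, (decompose φ).cLo, (decompose φ).cHi,
            (decompose φ).progs.map (Prog.shiftConst a)⟩ from by
          simp [Decomp.outerF]] at hok
        obtain ⟨lam, hfeas, h⟩ := hok
        refine ⟨a, Set.mem_Icc.mpr ⟨le_refl a, le_refl a⟩, ?_⟩
        refine ih hwf.2 _ ⟨lam, hfeas, ?_⟩
        intro p hp
        have := h (p.shiftConst a) (List.mem_map.mpr ⟨p, hp, rfl⟩)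
        rwa [Prog.holds_shiftConst'] at this
      · rw [show (decompose φ).outerF a b =
          ⟨Option (decompose φ).ι, fun i => i.elim a (decompose φ).cLo,
            fun i => i.elim b (decompose φ).cHi,
            (decompose φ).progs.map (fun p => (p.rename some).addVar none)⟩ from by
          simp [Decomp.outerF, hab]] at hok
        obtain ⟨lam, hfeas, h⟩ := hok
        obtain ⟨hlo, hhi⟩ := hfeas none
        refine ⟨lam none, Set.mem_Icc.mpr ⟨hlo, hhi⟩, ?_⟩
        refine ih hwf.2 _ ⟨lam ∘ some, fun i => hfeas (some i), ?_⟩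
        intro p hp
        have := h ((p.rename some).addVar none) (List.mem_map.mpr ⟨p, hp, rfl⟩)
        rw [Prog.holds_addVar', Prog.holds_rename'] at this
        exact this
  | G a b φ ih =>
    intro x hok
    cases hA : φ.atomOf with
    | some μ =>
      have hφ : φ = .atom μ := STL.atomOf_eq_some hA
      subst hφ
      rw [show decompose (STL.G a b (STL.atom μ)) =
        ⟨Empty, fun i => i.elim, fun i => i.elim, [.inv ⟨a, []⟩ ⟨b, []⟩ μ]⟩ from rfl] at hok
      obtain ⟨lam, hfeas, h⟩ := hok
      have hh := h _ (List.mem_singleton.mpr rfl)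
      simp only [Prog.holds, Aff.eval, List.map_nil, List.sum_nil, Set.mem_Icc] at hh
      intro k hk
      obtain ⟨h1, h2⟩ := Set.mem_Icc.mp hk
      have := hh k (by omega)
      simpa [STL.sat, shift] using this
    | none =>
      have hdec : decompose (STL.G a b φ) = (decompose φ).outerG a b := by
        simp only [decompose]; rw [hA]
      rw [hdec] at hok
      obtain ⟨lam, hfeas, h⟩ := hok
      intro k hk
      obtain ⟨hak, hkb⟩ := Set.mem_Icc.mp hk
      have hwfa : a ≤ b := hwf.1
      have hjlt : k - a < b + 1 - a := by omega
      set j : Fin (b + 1 - a) := ⟨k - a, hjlt⟩ with hj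
      have hkaj : a + j.1 = k := by simp [hj]; omega
      refine ih hwf.2 _ ⟨fun i => lam (j, i), fun i => hfeas (j, i), ?_⟩
      intro p hp
      by_cases hc : p.isConstInv
      · obtain ⟨c, d, μ, rfl⟩ := Prog.isConstInv_eq_true hc
        have hmem : (Prog.inv ⟨c + a, []⟩ ⟨d + b, []⟩ μ : Prog X _) ∈
            (Decomp.outerG a b (decompose φ)).progs := by
          simp only [Decomp.outerG, List.mem_append]
          exact List.mem_append.mpr (Or.inl (List.mem_filterMap.mpr ⟨_, hp, rfl⟩))
        have hh := h _ hmem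
        simp only [Prog.holds, Aff.eval, List.map_nil, List.sum_nil, Set.mem_Icc] at hh ⊢
        intro t ht
        simpa [shift] using hh (t + k) (by omega)
      · have hmem : (p.rename (fun i => (j, i))).shiftConst (a + j.1) ∈
            (Decomp.outerG a b (decompose φ)).progs := by
          simp only [Decomp.outerG, List.mem_append]
          refine List.mem_append.mpr (Or.inr (List.mem_flatMap.mpr ⟨j, List.mem_finRange j, ?_⟩))
          exact List.mem_map.mpr ⟨p, List.mem_filter.mpr ⟨hp, by simp [hc]⟩, rfl⟩
        have hh := h _ hmem
        replace hh := (Prog.holds_rename' _ _ _ _).mp ((Prog.holds_shiftConst' _ _ _ _).mp hh)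
        rwa [hkaj] at hh
  | U g a b ψ ih =>
    rintro x ⟨lam, hfeas, h⟩
    obtain ⟨hlo, hhi⟩ := hfeas none
    refine ⟨lam none, Set.mem_Icc.mpr ⟨hlo, hhi⟩, ?_, ?_⟩
    · refine ih hwf.2.2 _ ⟨lam ∘ some, fun i => hfeas (some i), ?_⟩
      intro p hp
      have := h ((p.rename some).addVar none)
        (by exact List.mem_append.mpr (Or.inl (List.mem_map.mpr ⟨p, hp, rfl⟩)))
      replace this := (Prog.holds_rename' _ _ _ _).mp ((Prog.holds_addVar' _ _ _ _).mp this)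
      exact this
    · intro j hj
      refine gsat_aux x (lam none) g ?_ j (Set.mem_Icc.mp hj).2
      intro cdm hc t ht
      have hmem : (Prog.inv ⟨cdm.1, []⟩ ⟨cdm.2.1, [none]⟩ cdm.2.2 :
          Prog X (Option (decompose ψ).ι)) ∈
          (decompose ψ).progs.map (fun p => (p.rename some).addVar none)
            ++ g.toList.map (fun cdm =>
              .inv ⟨cdm.1, []⟩ ⟨cdm.2.1, [(none : Option (decompose ψ).ι)]⟩ cdm.2.2) := by
        simp only [List.mem_append]
        exact Or.inr (List.mem_map.mpr ⟨cdm, hc, rfl⟩)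
      have hh := h _ hmem
      simp only [Prog.holds, Aff.eval, List.map_nil, List.sum_nil, List.map_cons,
        List.sum_cons, Set.mem_Icc] at hh
      exact hh t (by obtain ⟨h1, h2⟩ := Set.mem_Icc.mp ht; show _ + 0 ≤ _ ∧ _ ≤ _ + (_ + 0); constructor <;> omega)

/-- **Soundness of the overall planner (Theorem 1).**
Let `φ` be an STL formula in positive normal form without disjunctions, in the restricted
fragment (every until-left operand a conjunction of always-over-atomic formulas, all interval
bounds `a ≤ b`), with decomposition `(P_φ, T_φ, Λ_φ)`.  Suppose there exist a feasible
assignment `lam` (i.e. `lam ∈ F_φ`), timed waypoints `(w 0, tw 0), …, (w n, tw n)` with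
`0 = tw 0 ≤ tw 1 ≤ … ≤ tw n`, and a signal `x : ℕ → X` such that:
(i) `x (tw i) = w i` for every `i`;
(ii) for every reachability progress `R(a_Λ, b_Λ, μ) ∈ P_φ` there is an index `i` with
`tw i ∈ [a_Λ(lam), b_Λ(lam)]` and `μ (w i)`; and
(iii) for every invariance progress `I(a_Λ, b_Λ, μ) ∈ P_φ` and every
`t ∈ [a_Λ(lam), b_Λ(lam)]`, `μ (x t)` holds.
Then `x` satisfies `φ` under the Boolean semantics of STL. -/
theorem planner_sound {X : Type} (φ : STL X) (hwf : φ.WF)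
    (lam : (decompose φ).ι → ℕ) (hfeas : (decompose φ).Feasible lam)
    (n : ℕ) (tw : Fin (n + 1) → ℕ) (w : Fin (n + 1) → X)
    (ht0 : tw 0 = 0) (hmono : Monotone tw)
    (x : ℕ → X)
    (hwp : ∀ i, x (tw i) = w i)
    (hreach : ∀ lo hi μ, Prog.reach lo hi μ ∈ (decompose φ).progs →
      ∃ i, tw i ∈ Set.Icc (Aff.eval lo lam) (Aff.eval hi lam) ∧ μ (w i))
    (hinv : ∀ lo hi μ, Prog.inv lo hi μ ∈ (decompose φ).progs →
      ∀ t ∈ Set.Icc (Aff.eval lo lam) (Aff.eval hi lam), μ (x t)) :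
    φ.sat x := by
  refine sound_aux φ hwf x ⟨lam, hfeas, ?_⟩
  intro p hp
  cases p with
  | reach lo hi μ =>
    obtain ⟨i, hti, hμ⟩ := hreach lo hi μ hp
    exact ⟨tw i, hti, by rw [hwp i]; exact hμ⟩
  | inv lo hi μ => exact hinv lo hi μ hp
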